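/- If a tangle generating function datum of size m (i.e. vectors S, A ∈ ℤ^m and a symmetric matrix Q ∈ ℤ^{m×m}) in 'active quiver form' with extra Pochhammer factor (q²;q²)_{|d_+|} over active indices d_+ ∈ ℕ^{m_+} is expanded via the Pochhammer-splitting lemma (applied with x² = q²), then the resulting datum in plain quiver form has size m + m_+, obtained by duplicating each active index; in particular the abstract identity holds: Σ_{d ∈ ℕ^{m}} f(d)·(q²;q²)_{|d_+|} = Σ_{d' ∈ ℕ^{m+m_+}} f'(d') where f' arises from f by substituting each active index d_i with a sum of two new indices and multiplying by an explicit sign and q-power monomial. -/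

import Mathlib

open Finset

noncomputable def q : RatFunc ℚ := RatFunc.X

/-- `(q²;q²)_k = ∏_{i=1}^{k} (1 - q^{2i})`. -/
noncomputable def qp (k : ℕ) : RatFunc ℚ := ∏ i ∈ Finset.range k, (1 - q ^ (2 * (i + 1)))

/-!
For a fixed index vector `d` both sides factor over the active indices. Listing these in
increasing order with partial sums `Dᵢ = ∑_{j < i} d_j`, the `q`-binomial theorem in base `q²`
expands `(q²;q²)_{dᵢ + Dᵢ} / (q²;q²)_{Dᵢ}` as
`∑_{αᵢ ≤ dᵢ} (-q)^{αᵢ} q^{αᵢ² + 2 αᵢ Dᵢ} [dᵢ choose αᵢ]_{q²}`,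
and the product of these ratios telescopes to `(q²;q²)_{|d₊|}`.
-/

theorem Finset.prod_div_telescope_partial_sums {ι M G₀ : Type*} [LinearOrder ι]
    [AddCommMonoid M] [CommGroupWithZero G₀] (g : M → G₀) (hg : ∀ x, g x ≠ 0)
    (s : Finset ι) (d : ι → M) :
    ∏ i ∈ s, g (d i + ∑ j ∈ s with j < i, d j) / g (∑ j ∈ s with j < i, d j) =
      g (∑ i ∈ s, d i) / g 0 := by
  induction s using Finset.induction_on_max with
  | empty => simp [hg]
  | insert a s ha ih =>
    have has : a ∉ s := fun h => lt_irrefl a (ha a h)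
    have h_before_a : ∑ j ∈ insert a s with j < a, d j = ∑ j ∈ s, d j := by
      rw [filter_insert, if_neg (lt_irrefl a), filter_true_of_mem ha]
    have h_before_s : ∀ i ∈ s, ∑ j ∈ insert a s with j < i, d j = ∑ j ∈ s with j < i, d j :=
      fun i hi => by rw [filter_insert, if_neg (ha i hi).asymm]
    rw [prod_insert has, prod_congr rfl fun i hi => by rw [h_before_s i hi], ih, h_before_a,
      sum_insert has, div_mul_div_cancel₀ (hg _)]

theorem Fintype.sum_piFinset_range_ite_prod {ι R : Type*} [Fintype ι] [DecidableEq ι]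
    [CommSemiring R] (s : Finset ι) (n : ι → ℕ) (h : ι → ℕ → R) :
    ∑ α ∈ Fintype.piFinset (fun i => range (if i ∈ s then n i + 1 else 1)),
        ∏ i ∈ s, h i (α i) =
      ∏ i ∈ s, ∑ a ∈ range (n i + 1), h i a := by
  have h_univ : ∀ α : ι → ℕ, ∏ i ∈ s, h i (α i) = ∏ i, if i ∈ s then h i (α i) else 1 :=
    fun α => by simp
  simp_rw [h_univ]
  rw [← prod_univ_sum (fun i => range (if i ∈ s then n i + 1 else 1))
      (fun i a => if i ∈ s then h i a else 1)]
  have h_coord : ∀ i, ∑ a ∈ range (if i ∈ s then n i + 1 else 1), (if i ∈ s then h i a else 1) =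
      if i ∈ s then ∑ a ∈ range (n i + 1), h i a else 1 := by
    intro i; split_ifs <;> simp
  simp [h_coord]

lemma q_pow_ne_one {n : ℕ} (hn : n ≠ 0) : q ^ n ≠ 1 := by
  intro h
  have h' : algebraMap (Polynomial ℚ) (RatFunc ℚ) (Polynomial.X ^ n) =
      algebraMap (Polynomial ℚ) (RatFunc ℚ) 1 := by
    simpa [q] using h
  simpa [hn] using congrArg Polynomial.natDegree (RatFunc.algebraMap_injective ℚ h')

lemma one_sub_q_pow_ne_zero {n : ℕ} (hn : n ≠ 0) : 1 - q ^ n ≠ 0 :=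
  sub_ne_zero.mpr (q_pow_ne_one hn).symm

lemma qp_zero : qp 0 = 1 := prod_range_zero _

lemma qp_succ (k : ℕ) : qp (k + 1) = qp k * (1 - q ^ (2 * (k + 1))) := prod_range_succ _ _

lemma qp_ne_zero (k : ℕ) : qp k ≠ 0 :=
  prod_ne_zero_iff.mpr fun _ _ => one_sub_q_pow_ne_zero (by omega)

/-- Extended by zero beyond `n`, so that the Pascal rule needs no side conditions. -/
noncomputable def qBinom (n k : ℕ) : RatFunc ℚ :=
  if k ≤ n then qp n / (qp k * qp (n - k)) else 0

lemma qBinom_of_le {n k : ℕ} (h : k ≤ n) : qBinom n k = qp n / (qp k * qp (n - k)) :=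
  if_pos h

lemma qBinom_zero_right (n : ℕ) : qBinom n 0 = 1 := by
  simp [qBinom_of_le, qp_zero, qp_ne_zero]

lemma qBinom_succ_self (n : ℕ) : qBinom n (n + 1) = 0 :=
  if_neg (by omega)

lemma qBinom_succ_succ (n k : ℕ) :
    qBinom (n + 1) (k + 1) = q ^ (2 * (k + 1)) * qBinom n (k + 1) + qBinom n k := by
  rcases lt_trichotomy k n with hlt | rfl | hgt
  · obtain ⟨j, rfl⟩ : ∃ j, n = k + j + 1 := ⟨n - k - 1, by omega⟩
    rw [qBinom_of_le (by omega), qBinom_of_le (by omega), qBinom_of_le (by omega),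
      show k + j + 1 + 1 - (k + 1) = j + 1 by omega, show k + j + 1 - (k + 1) = j by omega,
      show k + j + 1 - k = j + 1 by omega, qp_succ (k + j + 1), qp_succ k, qp_succ j]
    have := qp_ne_zero k
    have := qp_ne_zero j
    have := one_sub_q_pow_ne_zero (n := 2 * (k + 1)) (by omega)
    have := one_sub_q_pow_ne_zero (n := 2 * (j + 1)) (by omega)
    field_simp
    ring
  · simp [qBinom_succ_self, qBinom_of_le, qp_zero, qp_ne_zero]
  · simp [qBinom, show ¬ k + 1 ≤ n + 1 by omega, show ¬ k + 1 ≤ n by omega,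
      show ¬ k ≤ n by omega]

/-- The `q`-binomial theorem `∑ₐ (-1)ᵃ x^{a(a+1)/2} x^{aN} [n choose a]_x = (x^{N+1}; x)_n`
at `x = q²`, with both sides multiplied by `(x; x)_N`. -/
lemma sum_range_qBinom_mul_qp (n N : ℕ) :
    (∑ a ∈ range (n + 1), (-q) ^ a * q ^ (a ^ 2 + 2 * (a * N)) * qBinom n a) * qp N =
      qp (n + N) := by
  induction n generalizing N with
  | zero => simp [qBinom_zero_right]
  | succ n ih =>
    have h_rec : ∑ a ∈ range (n + 2), (-q) ^ a * q ^ (a ^ 2 + 2 * (a * N)) * qBinom (n + 1) a =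
        (1 - q ^ (2 * (N + 1))) *
          ∑ a ∈ range (n + 1), (-q) ^ a * q ^ (a ^ 2 + 2 * (a * (N + 1))) * qBinom n a := by
      set U : ℕ → RatFunc ℚ := fun a => (-q) ^ a * q ^ (a ^ 2 + 2 * (a * (N + 1))) * qBinom n a
      have h_term : ∀ b, (-q) ^ (b + 1) * q ^ ((b + 1) ^ 2 + 2 * ((b + 1) * N)) *
          qBinom (n + 1) (b + 1) = U (b + 1) - q ^ (2 * (N + 1)) * U b := by
        intro b
        simp only [U, qBinom_succ_succ]
        ring
      have h_shift : ∑ b ∈ range (n + 1), U (b + 1) + U 0 = ∑ a ∈ range (n + 1), U a := by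
        rw [← sum_range_succ' U (n + 1), sum_range_succ]
        simp [U, qBinom_succ_self]
      rw [sum_range_succ', sum_congr rfl fun b _ => h_term b, sum_sub_distrib, ← mul_sum]
      have hU0 : U 0 = 1 := by simp [U, qBinom_zero_right]
      rw [qBinom_zero_right, ← h_shift, hU0]
      ring
    rw [h_rec, mul_right_comm, mul_comm (1 - _) (qp N), ← qp_succ, mul_comm, ih,
      show n + (N + 1) = n + 1 + N by omega]

lemma qp_add_div_qp_eq_sum (n N : ℕ) :
    qp (n + N) / qp N =
      ∑ a ∈ range (n + 1), (-q) ^ a * q ^ (a ^ 2 + 2 * (a * N)) * (qp n / (qp a * qp (n - a))) := by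
  rw [div_eq_iff (qp_ne_zero N), ← sum_range_qBinom_mul_qp]
  congr 1
  exact sum_congr rfl fun a ha => by rw [qBinom_of_le (by simpa [Nat.lt_succ_iff] using ha)]

/-- Expansion of an active quiver form into plain quiver form (Remark 'deactivate'):
for any finitely supported coefficient function `f` on `ℕ^m` and any set `act` of active
indices, multiplying by the extra Pochhammer factor `(q²;q²)_{|d_+|}` and summing equals
the sum over the duplicated index set, where each active index `d_i` is split as
`d_i = α_i + β_i`, with the explicit sign `(-q)^{|α|}` and `q`-power prefactor coming from
the `x² = q²` specialization of the KRSS Pochhammer-splitting lemma.  In particular the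
resulting quiver form datum has `m + m_+` summation indices. -/
theorem deactivate_active_quiver_form {m : ℕ} (act : Finset (Fin m))
    (f : (Fin m → ℕ) →₀ RatFunc ℚ) :
    ∑ d ∈ f.support, f d * qp (∑ i ∈ act, d i) =
      ∑ d ∈ f.support,
        ∑ α ∈ Fintype.piFinset (fun i => Finset.range (if i ∈ act then d i + 1 else 1)),
          f d * ((-q) ^ (∑ i ∈ act, α i) *
            q ^ (∑ i ∈ act, (α i) ^ 2 +
              2 * ∑ i ∈ act, ∑ j ∈ act, if j < i then α i * d j else 0) *
            ∏ i ∈ act, (qp (d i) / (qp (α i) * qp (d i - α i)))) := by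
  refine sum_congr rfl fun d _ => ?_
  rw [← mul_sum]
  congr 1
  set D : Fin m → ℕ := fun i => ∑ j ∈ act with j < i, d j
  have h_factor : ∀ α : Fin m → ℕ,
      (-q) ^ (∑ i ∈ act, α i) *
          q ^ (∑ i ∈ act, (α i) ^ 2 + 2 * ∑ i ∈ act, ∑ j ∈ act, if j < i then α i * d j else 0) *
          ∏ i ∈ act, (qp (d i) / (qp (α i) * qp (d i - α i))) =
        ∏ i ∈ act, (-q) ^ α i * q ^ (α i ^ 2 + 2 * (α i * D i)) *
          (qp (d i) / (qp (α i) * qp (d i - α i))) := by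
    intro α
    rw [prod_mul_distrib, prod_mul_distrib, prod_pow_eq_pow_sum, prod_pow_eq_pow_sum,
      sum_add_distrib, ← mul_sum]
    simp only [D, mul_sum, sum_filter, mul_ite, mul_zero]
  rw [sum_congr rfl fun α _ => h_factor α, Fintype.sum_piFinset_range_ite_prod act d
      fun i a => (-q) ^ a * q ^ (a ^ 2 + 2 * (a * D i)) * (qp (d i) / (qp a * qp (d i - a))),
    ← prod_congr rfl fun i _ => qp_add_div_qp_eq_sum (d i) (D i),
    prod_div_telescope_partial_sums qp qp_ne_zero, qp_zero, div_one]
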